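/- Let n ≥ 5 and 0 < s < 2. With U₁ the standard Hardy-Sobolev bubble U₁(X) = κ_{n,s}(1+|X|^{2-s})^{-(n-2)/(2-s)}, κ_{n,s} = ((n-s)(n-2))^{(n-2)/(2(2-s))}, and 2⋆(s) = 2(n-s)/(n-2), one has the identity ∫_{ℝⁿ}|X|²|∇U₁|² dX / ∫_{ℝⁿ}U₁² dX − (2/2⋆(s)) ∫_{ℝⁿ}|X|^{2-s}U₁^{2⋆(s)} dX / ∫_{ℝⁿ}U₁² dX = 6n·c_{n,s}, where c_{n,s} = (n-2)(6-s)/(12(2n-2-s)). -/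

import Mathlib

open MeasureTheory

noncomputable def kappa (n : ℕ) (s : ℝ) : ℝ :=
  (((n : ℝ) - s) * ((n : ℝ) - 2)) ^ (((n : ℝ) - 2) / (2 * (2 - s)))

noncomputable def U1 (n : ℕ) (s : ℝ) (X : EuclideanSpace ℝ (Fin n)) : ℝ :=
  kappa n s * (1 + ‖X‖ ^ (2 - s)) ^ (-(((n : ℝ) - 2) / (2 - s)))

noncomputable def critExp (n : ℕ) (s : ℝ) : ℝ := 2 * ((n : ℝ) - s) / ((n : ℝ) - 2)

open Set Real Filter Topology

/-! In polar coordinates, with `t = 2 - s` and `m = (n - 2) / t`, each of the three integrals is a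
multiple of a moment `J(a, b) = ∫₀^∞ r^(a-1) (1 + r^t)^(-b) dr`: `∫ U₁²` is `κ² J(n, 2m)`, and the two
numerators are `κ² (n - 2)² J(n + 2t, 2m + 2)` and `κ^(2⋆(s)) J(n + t, 2m + 2)`, where
`κ^(2⋆(s) - 2) = (n - s)(n - 2)`. Integration by parts gives `a J(a, b) = b t J(a + t, b + 1)`, and
writing `1 = (1 + r^t) - r^t` gives `J(a, b + 1) = J(a, b) - J(a + t, b + 1)`; together they turn
both numerators into explicit rational multiples of `J(n, 2m)`. Every moment involved is finite
exactly when `n > 4`. -/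

noncomputable def bubbleMoment (t a b : ℝ) : ℝ :=
  ∫ r in Ioi (0 : ℝ), r ^ (a - 1) * (1 + r ^ t) ^ (-b)

section BubbleMoment

variable {r t a b : ℝ}

lemma one_add_rpow_rpow_neg_le (hr : 0 < r) (hb : 0 ≤ b) :
    (1 + r ^ t) ^ (-b) ≤ r ^ (-(t * b)) := by
  have hrt : 0 < r ^ t := rpow_pos_of_pos hr t
  calc (1 + r ^ t) ^ (-b) ≤ (r ^ t) ^ (-b) := rpow_le_rpow_of_nonpos hrt (by linarith) (by linarith)
    _ = r ^ (-(t * b)) := by rw [← rpow_mul hr.le, mul_neg]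

lemma integrableOn_bubbleMoment (ht : 0 < t) (ha : 0 < a) (hab : a < b * t) :
    IntegrableOn (fun r : ℝ => r ^ (a - 1) * (1 + r ^ t) ^ (-b)) (Ioi 0) := by
  have hb : 0 ≤ b := (pos_of_mul_pos_left (ha.trans hab) ht.le).le
  have hmeas : AEStronglyMeasurable (fun r : ℝ => r ^ (a - 1) * (1 + r ^ t) ^ (-b)) volume := by
    fun_prop
  rw [← Ioc_union_Ioi_eq_Ioi zero_le_one]
  refine IntegrableOn.union ?_ ?_
  · refine (intervalIntegral.intervalIntegrable_rpow' (a := 0) (b := 1) (r := a - 1)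
      (by linarith)).1.mono' hmeas.restrict ?_
    filter_upwards [ae_restrict_mem measurableSet_Ioc] with r ⟨hr, _⟩
    have hle : (1 + r ^ t) ^ (-b) ≤ 1 :=
      rpow_le_one_of_one_le_of_nonpos (by linarith [rpow_nonneg hr.le t]) (by linarith)
    rw [norm_of_nonneg (by positivity)]
    exact mul_le_of_le_one_right (rpow_nonneg hr.le _) hle
  · refine (integrableOn_Ioi_rpow_of_lt (a := a - 1 - t * b) (by nlinarith) one_pos).mono'
      hmeas.restrict ?_
    filter_upwards [ae_restrict_mem measurableSet_Ioi] with r (hr : 1 < r)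
    have hr0 : 0 < r := one_pos.trans hr
    rw [norm_of_nonneg (by positivity), sub_eq_add_neg _ (t * b), rpow_add hr0]
    exact mul_le_mul_of_nonneg_left (one_add_rpow_rpow_neg_le hr0 hb) (rpow_nonneg hr0.le _)

lemma bubbleMoment_pos (ht : 0 < t) (ha : 0 < a) (hab : a < b * t) : 0 < bubbleMoment t a b := by
  have hpos : ∀ r ∈ Ioi (0 : ℝ), 0 < r ^ (a - 1) * (1 + r ^ t) ^ (-b) := fun r (hr : 0 < r) =>
    mul_pos (rpow_pos_of_pos hr _) (rpow_pos_of_pos (by positivity) _)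
  rw [bubbleMoment, setIntegral_pos_iff_support_of_nonneg_ae
    (ae_restrict_of_forall_mem measurableSet_Ioi fun r hr => (hpos r hr).le)
    (integrableOn_bubbleMoment ht ha hab)]
  rw [inter_eq_right.mpr (show Ioi (0 : ℝ) ⊆ Function.support _ from fun r hr => (hpos r hr).ne')]
  simp

lemma hasDerivAt_rpow_mul_one_add_rpow_rpow_neg (hr : 0 < r) :
    HasDerivAt (fun r : ℝ => r ^ a * (1 + r ^ t) ^ (-b))
      (a * (r ^ (a - 1) * (1 + r ^ t) ^ (-b))
        - b * t * (r ^ (a + t - 1) * (1 + r ^ t) ^ (-(b + 1)))) r := by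
  have hbase : 0 < 1 + r ^ t := by positivity
  have hpow := (hasDerivAt_rpow_const (p := t) (Or.inl hr.ne')).const_add 1
  have hneg := (hasDerivAt_rpow_const (p := -b) (Or.inl hbase.ne')).comp r hpow
  refine ((hasDerivAt_rpow_const (p := a) (Or.inl hr.ne')).mul hneg).congr_deriv ?_
  rw [show a + t - 1 = a + (t - 1) by ring, rpow_add hr, show -(b + 1) = -b - 1 by ring,
    Function.comp_apply]
  ring

lemma tendsto_rpow_mul_one_add_rpow_rpow_neg (hb : 0 ≤ b) (hab : a < b * t) :
    Tendsto (fun r : ℝ => r ^ a * (1 + r ^ t) ^ (-b)) atTop (𝓝 0) := by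
  refine squeeze_zero' ?_ ?_ (tendsto_rpow_neg_atTop (y := b * t - a) (by linarith))
  · filter_upwards [eventually_gt_atTop 0] with r hr
    have : 0 < 1 + r ^ t := by positivity
    positivity
  · filter_upwards [eventually_gt_atTop 0] with r hr
    calc r ^ a * (1 + r ^ t) ^ (-b) ≤ r ^ a * r ^ (-(t * b)) :=
          mul_le_mul_of_nonneg_left (one_add_rpow_rpow_neg_le hr hb) (rpow_nonneg hr.le _)
      _ = r ^ (-(b * t - a)) := by rw [← rpow_add hr]; ring_nf

lemma bubbleMoment_recursion (ht : 0 < t) (ha : 0 < a) (hab : a < b * t) :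
    a * bubbleMoment t a b = b * t * bubbleMoment t (a + t) (b + 1) := by
  have hb : 0 ≤ b := (pos_of_mul_pos_left (ha.trans hab) ht.le).le
  have hint := integrableOn_bubbleMoment ht ha hab
  have hint' := integrableOn_bubbleMoment (a := a + t) (b := b + 1) ht (by linarith) (by linarith)
  have hcont : ContinuousAt (fun r : ℝ => r ^ a * (1 + r ^ t) ^ (-b)) 0 :=
    (continuousAt_rpow_const 0 a (Or.inr ha.le)).mul <|
      ((continuousAt_rpow_const 0 t (Or.inr ht.le)).const_add 1).rpow_const
        (Or.inl (by simp [zero_rpow ht.ne']))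
  have hftc := integral_Ioi_of_hasDerivAt_of_tendsto hcont.continuousWithinAt
    (fun r hr => hasDerivAt_rpow_mul_one_add_rpow_rpow_neg hr)
    ((hint.const_mul a).sub (hint'.const_mul (b * t)))
    (tendsto_rpow_mul_one_add_rpow_rpow_neg hb hab)
  rw [integral_sub (hint.const_mul a) (hint'.const_mul (b * t)), integral_const_mul,
    integral_const_mul, zero_rpow ha.ne', zero_mul, sub_zero] at hftc
  rw [bubbleMoment, bubbleMoment]
  linarith

lemma bubbleMoment_eq_add (ht : 0 < t) (ha : 0 < a) (hab : a < b * t) :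
    bubbleMoment t a b = bubbleMoment t a (b + 1) + bubbleMoment t (a + t) (b + 1) := by
  rw [bubbleMoment, bubbleMoment, bubbleMoment,
    ← integral_add (integrableOn_bubbleMoment ht ha (by linarith))
      (integrableOn_bubbleMoment ht (by linarith) (by linarith))]
  refine setIntegral_congr_fun measurableSet_Ioi fun r (hr : 0 < r) => ?_
  have hbase : 0 < 1 + r ^ t := by positivity
  rw [show a + t - 1 = (a - 1) + t by ring, rpow_add hr, show -b = -(b + 1) + 1 by ring,
    rpow_add_one hbase.ne']
  ring

lemma bubbleMoment_add_two_mul_add_two (ht : 0 < t) (ha : 0 < a) (hab : a < b * t) :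
    bubbleMoment t (a + 2 * t) (b + 2) =
      a * (a + t) / (b * (b + 1) * t ^ 2) * bubbleMoment t a b := by
  have hb : 0 < b := pos_of_mul_pos_left (ha.trans hab) ht.le
  have h₁ := bubbleMoment_recursion ht ha hab
  have h₂ := bubbleMoment_recursion (a := a + t) (b := b + 1) ht (by linarith) (by linarith)
  rw [show a + t + t = a + 2 * t by ring, show b + 1 + 1 = b + 2 by ring] at h₂
  rw [div_mul_eq_mul_div, eq_div_iff (by positivity)]
  linear_combination -b * t * h₂ - (a + t) * h₁

lemma bubbleMoment_add_add_two (ht : 0 < t) (ha : 0 < a) (hab : a < b * t) :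
    bubbleMoment t (a + t) (b + 2) =
      a * (b * t - a) / (b * (b + 1) * t ^ 2) * bubbleMoment t a b := by
  have hb : 0 < b := pos_of_mul_pos_left (ha.trans hab) ht.le
  have h₁ := bubbleMoment_recursion ht ha hab
  have h₂ := bubbleMoment_eq_add (a := a + t) (b := b + 1) ht (by linarith) (by linarith)
  have h₃ := bubbleMoment_recursion (a := a + t) (b := b + 1) ht (by linarith) (by linarith)
  rw [show a + t + t = a + 2 * t by ring, show b + 1 + 1 = b + 2 by ring] at h₂ h₃
  rw [div_mul_eq_mul_div, eq_div_iff (by positivity)]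
  linear_combination -b * (b + 1) * t ^ 2 * h₂ + b * t * h₃ - (b * t - a) * h₁

end BubbleMoment

lemma integral_rpow_norm_mul_one_add_rpow_norm_rpow_neg {E : Type*} [NormedAddCommGroup E]
    [InnerProductSpace ℝ E] [FiniteDimensional ℝ E] [Nontrivial E] [MeasurableSpace E]
    [BorelSpace E] (μ : Measure E) [μ.IsAddHaarMeasure] (q t b : ℝ) :
    ∫ x, ‖x‖ ^ q * (1 + ‖x‖ ^ t) ^ (-b) ∂μ =
      Module.finrank ℝ E * μ.real (Metric.ball 0 1) *
        bubbleMoment t (Module.finrank ℝ E + q) b := by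
  rw [integral_fun_norm_addHaar (F := ℝ) μ (fun r : ℝ => r ^ q * (1 + r ^ t) ^ (-b)), bubbleMoment,
    nsmul_eq_mul, smul_eq_mul, mul_assoc]
  congr 2
  refine setIntegral_congr_fun measurableSet_Ioi fun r (hr : 0 < r) => ?_
  rw [smul_eq_mul, ← rpow_natCast, Nat.cast_pred (Module.finrank_pos (R := ℝ) (M := E)),
    show (Module.finrank ℝ E : ℝ) + q - 1 = (Module.finrank ℝ E - 1) + q by ring, rpow_add hr]
  ring

lemma HasDerivAt.hasGradientAt_comp_norm_sq {F : Type*} [NormedAddCommGroup F]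
    [InnerProductSpace ℝ F] [CompleteSpace F] {h : ℝ → ℝ} {h' : ℝ} {x : F}
    (hh : HasDerivAt h h' (‖x‖ ^ 2)) :
    HasGradientAt (fun y => h (‖y‖ ^ 2)) ((2 * h') • x) x := by
  rw [hasGradientAt_iff_hasFDerivAt]
  refine (hh.comp_hasFDerivAt x (hasStrictFDerivAt_norm_sq x).hasFDerivAt).congr_fderiv ?_
  ext y
  simp only [smul_apply, coe_innerSL_apply, nsmul_eq_mul, Nat.cast_ofNat,
    smul_eq_mul, map_smul, InnerProductSpace.toDual_apply_apply]
  ring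

section U1

variable {n : ℕ} {s : ℝ}

lemma kappa_pos (hn : 2 < n) (hs : s < 2) : 0 < kappa n s := by
  have hn' : (2 : ℝ) < n := by exact_mod_cast hn
  exact rpow_pos_of_pos (by nlinarith) _

lemma kappa_rpow_critExp (hn : 2 < n) (hs : s < 2) :
    kappa n s ^ critExp n s = kappa n s ^ 2 * ((n - s) * (n - 2)) := by
  have hn' : (2 : ℝ) < n := by exact_mod_cast hn
  have hbase : 0 < ((n : ℝ) - s) * (n - 2) := by nlinarith
  have hn2 : (n : ℝ) - 2 ≠ 0 := by linarith
  have hs2 : 2 - s ≠ 0 := by linarith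
  have hpow : kappa n s ^ (critExp n s - 2) = (n - s) * (n - 2) := by
    rw [kappa, ← rpow_mul hbase.le, critExp]
    convert rpow_one _ using 2
    field_simp
    ring
  rw [← hpow, ← rpow_natCast, ← rpow_add (kappa_pos hn hs)]
  norm_num

lemma sq_norm_mul_sq_norm_gradient_U1 (hs : s < 2) (X : EuclideanSpace ℝ (Fin n)) :
    ‖X‖ ^ 2 * ‖gradient (U1 n s) X‖ ^ 2 =
      (kappa n s * (n - 2)) ^ 2 *
        (‖X‖ ^ (2 * (2 - s)) * (1 + ‖X‖ ^ (2 - s)) ^ (-(2 * ((n - 2) / (2 - s)) + 2))) := by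
  obtain rfl | hX := eq_or_ne X 0
  · simp [zero_rpow (show 2 * (2 - s) ≠ 0 by linarith)]
  have hr : 0 < ‖X‖ := norm_pos_iff.mpr hX
  set t := 2 - s with ht_def
  have ht : 0 < t := by linarith
  set m := ((n : ℝ) - 2) / t
  set κ := kappa n s
  have hsq : ∀ (Y : EuclideanSpace ℝ (Fin n)) (p : ℝ), (‖Y‖ ^ 2) ^ (p / 2) = ‖Y‖ ^ p :=
    fun Y p => by rw [← rpow_natCast, ← rpow_mul (norm_nonneg Y)]; ring_nf
  have hU : U1 n s = fun Y => κ * (1 + (‖Y‖ ^ 2) ^ (t / 2)) ^ (-m) := by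
    funext Y
    rw [hsq]
    rfl
  have hbase : 0 < 1 + ‖X‖ ^ t := by positivity
  have hderiv := (((hasDerivAt_rpow_const (p := t / 2) (Or.inl (pow_pos hr 2).ne')).const_add 1
    ).rpow_const (p := -m) (Or.inl (hsq X t ▸ hbase).ne')).const_mul κ
  rw [hU, hderiv.hasGradientAt_comp_norm_sq.gradient, norm_smul, Real.norm_eq_abs, mul_pow,
    sq_abs, show t / 2 - 1 = (t - 2) / 2 by ring, hsq, hsq]
  have hpow : ‖X‖ ^ (2 * t) = (‖X‖ ^ (t - 2)) ^ 2 * ‖X‖ ^ 2 * ‖X‖ ^ 2 := by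
    simp only [← rpow_natCast, ← rpow_mul hr.le, ← rpow_add hr]
    ring_nf
  have hbase_pow : (1 + ‖X‖ ^ t) ^ (-(2 * m + 2)) = ((1 + ‖X‖ ^ t) ^ (-m - 1)) ^ 2 := by
    rw [← rpow_natCast, ← rpow_mul hbase.le]
    ring_nf
  have hmt : m * t = n - 2 := div_mul_cancel₀ _ ht.ne'
  rw [hpow, hbase_pow, ← hmt]
  ring

variable [NeZero n]

lemma integral_U1_sq :
    ∫ X : EuclideanSpace ℝ (Fin n), U1 n s X ^ 2 =
      n * volume.real (Metric.ball (0 : EuclideanSpace ℝ (Fin n)) 1) * kappa n s ^ 2 *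
        bubbleMoment (2 - s) n (2 * ((n - 2) / (2 - s))) := by
  have hU : ∀ X : EuclideanSpace ℝ (Fin n), U1 n s X ^ 2 = kappa n s ^ 2 *
      (‖X‖ ^ (0 : ℝ) * (1 + ‖X‖ ^ (2 - s)) ^ (-(2 * ((n - 2) / (2 - s))))) := fun X => by
    rw [U1, mul_pow, rpow_zero, one_mul, ← rpow_mul_natCast (by positivity)]
    ring_nf
  simp_rw [hU, integral_const_mul, integral_rpow_norm_mul_one_add_rpow_norm_rpow_neg,
    finrank_euclideanSpace_fin, add_zero]
  ring

lemma integral_U1_sq_pos (hn : 4 < n) (hs : s < 2) :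
    0 < ∫ X : EuclideanSpace ℝ (Fin n), U1 n s X ^ 2 := by
  have hn' : (4 : ℝ) < n := by exact_mod_cast hn
  have ht : 0 < 2 - s := by linarith
  have hball : 0 < volume.real (Metric.ball (0 : EuclideanSpace ℝ (Fin n)) 1) :=
    ENNReal.toReal_pos (Metric.measure_ball_pos volume 0 one_pos).ne' measure_ball_lt_top.ne
  have hκ := kappa_pos (by omega : 2 < n) hs
  have hJ := bubbleMoment_pos ht (a := n) (b := 2 * ((n - 2) / (2 - s))) (by linarith)
    (by rw [mul_assoc, div_mul_cancel₀ _ ht.ne']; linarith)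
  rw [integral_U1_sq]
  positivity

lemma integral_sq_norm_mul_sq_norm_gradient_U1 (hn : 4 < n) (hs : s < 2) :
    ∫ X : EuclideanSpace ℝ (Fin n), ‖X‖ ^ 2 * ‖gradient (U1 n s) X‖ ^ 2 =
      n * (n - 2) * (n + 2 - s) / (2 * (2 * n - 2 - s)) *
        ∫ X : EuclideanSpace ℝ (Fin n), U1 n s X ^ 2 := by
  have hn' : (4 : ℝ) < n := by exact_mod_cast hn
  have ht : 0 < 2 - s := by linarith
  simp_rw [sq_norm_mul_sq_norm_gradient_U1 hs, integral_const_mul,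
    integral_rpow_norm_mul_one_add_rpow_norm_rpow_neg, finrank_euclideanSpace_fin]
  have hmt : 2 * ((n - 2) / (2 - s)) * (2 - s) = 2 * (n - 2) := by field_simp
  rw [bubbleMoment_add_two_mul_add_two ht (by linarith) (by linarith), integral_U1_sq]
  field_simp
  ring

lemma integral_rpow_norm_mul_U1_rpow_critExp (hn : 4 < n) (hs : s < 2) :
    ∫ X : EuclideanSpace ℝ (Fin n), ‖X‖ ^ (2 - s) * U1 n s X ^ critExp n s =
      (n - s) * n * (n - 4) / (2 * (2 * n - 2 - s)) *
        ∫ X : EuclideanSpace ℝ (Fin n), U1 n s X ^ 2 := by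
  have hn' : (4 : ℝ) < n := by exact_mod_cast hn
  have ht : 0 < 2 - s := by linarith
  have hn2 : (n : ℝ) - 2 ≠ 0 := by linarith
  have hden : 2 * (n : ℝ) - 2 - s ≠ 0 := by linarith
  have hexp : -((n - 2) / (2 - s)) * critExp n s = -(2 * ((n - 2) / (2 - s)) + 2) := by
    rw [critExp]
    field_simp
    ring
  have hU : ∀ X : EuclideanSpace ℝ (Fin n), ‖X‖ ^ (2 - s) * U1 n s X ^ critExp n s =
      kappa n s ^ critExp n s *
        (‖X‖ ^ (2 - s) * (1 + ‖X‖ ^ (2 - s)) ^ (-(2 * ((n - 2) / (2 - s)) + 2))) := fun X => by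
    rw [U1, mul_rpow (kappa_pos (by omega) hs).le (by positivity), ← rpow_mul (by positivity),
      hexp]
    ring
  have hmt : 2 * ((n - 2) / (2 - s)) * (2 - s) = 2 * (n - 2) := by field_simp
  simp_rw [hU, integral_const_mul, integral_rpow_norm_mul_one_add_rpow_norm_rpow_neg,
    finrank_euclideanSpace_fin]
  rw [bubbleMoment_add_add_two ht (by linarith) (by linarith), kappa_rpow_critExp (by omega) hs,
    hmt, integral_U1_sq]
  field_simp
  ring

end U1

theorem stmt_6_general (n : ℕ) (hn : 5 ≤ n) (s : ℝ) (hs2 : s < 2) :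
    (∫ X : EuclideanSpace ℝ (Fin n), ‖X‖ ^ 2 * ‖gradient (U1 n s) X‖ ^ 2) /
          (∫ X : EuclideanSpace ℝ (Fin n), (U1 n s X) ^ 2) -
        (2 / critExp n s) *
          ((∫ X : EuclideanSpace ℝ (Fin n), ‖X‖ ^ (2 - s) * (U1 n s X) ^ (critExp n s)) /
            (∫ X : EuclideanSpace ℝ (Fin n), (U1 n s X) ^ 2)) =
      6 * (n : ℝ) * (((n : ℝ) - 2) * (6 - s) / (12 * (2 * (n : ℝ) - 2 - s))) := by
  have : NeZero n := ⟨by omega⟩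
  have hn' : (5 : ℝ) ≤ n := by exact_mod_cast hn
  have hpos := integral_U1_sq_pos (by omega : 4 < n) hs2
  have hp : 2 / critExp n s = (n - 2) / (n - s) := by
    rw [critExp]
    field_simp
  rw [integral_sq_norm_mul_sq_norm_gradient_U1 (by omega) hs2,
    integral_rpow_norm_mul_U1_rpow_critExp (by omega) hs2, mul_div_cancel_right₀ _ hpos.ne',
    mul_div_cancel_right₀ _ hpos.ne', hp]
  have : (n : ℝ) - s ≠ 0 := by linarith
  have : 2 * (n : ℝ) - 2 - s ≠ 0 := by linarith
  field_simp
  ring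

theorem stmt_6 (n : ℕ) (hn : 5 ≤ n) (s : ℝ) (hs0 : 0 < s) (hs2 : s < 2) :
    (∫ X : EuclideanSpace ℝ (Fin n), ‖X‖ ^ 2 * ‖gradient (U1 n s) X‖ ^ 2) /
          (∫ X : EuclideanSpace ℝ (Fin n), (U1 n s X) ^ 2) -
        (2 / critExp n s) *
          ((∫ X : EuclideanSpace ℝ (Fin n), ‖X‖ ^ (2 - s) * (U1 n s X) ^ (critExp n s)) /
            (∫ X : EuclideanSpace ℝ (Fin n), (U1 n s X) ^ 2)) =
      6 * (n : ℝ) * (((n : ℝ) - 2) * (6 - s) / (12 * (2 * (n : ℝ) - 2 - s))) :=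
  stmt_6_general n hn s hs2
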